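/- arXiv:1907.08369 — 3 statements merged into one kernel-verified Lean document; each statement's English description precedes it below -/
import Mathlib

section
/- For all real c, the variance of the shifted asymmetric loss, Var := ∫ L(z+c)²·f(z) dz − (∫ L(z+c)·f(z) dz)², equals (k₁+k₂)²·c²/4 + ((k₁²−k₂²)·b·c/(2·Γ(a)))·Γ-upper(2a, |c/b|^{1/a}) − ((k₁+k₂)²·b·|c|/(2·Γ(a)²))·γ(a, |c/b|^{1/a})·Γ-upper(2a, |c/b|^{1/a}) − ((k₁+k₂)²·c²/(4·Γ(a)²))·γ(a, |c/b|^{1/a})² − ((k₁+k₂)²·b²/(4·Γ(a)²))·Γ-upper(2a, |c/b|^{1/a})² + (k₁²+k₂²)·b²·Γ(3a)/(2·Γ(a)) + Sgn(c)·((k₁²−k₂²)·b²/(2·Γ(a)))·γ(3a, |c/b|^{1/a}). -/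
open Real MeasureTheory Filter

/-- The asymmetric loss function. -/
noncomputable def asymLoss (k₁ k₂ z : ℝ) : ℝ := if 0 ≤ z then k₁ * z else -k₂ * z

/-- The generalized Gaussian density with mean zero. -/
noncomputable def genGauss (a b z : ℝ) : ℝ :=
  (2 * a * b * Real.Gamma a)⁻¹ * Real.exp (-(|z / b| ^ (1 / a)))

/-- The lower incomplete gamma function. -/
noncomputable def lowerGamma (p x : ℝ) : ℝ := ∫ t in (0:ℝ)..x, t ^ (p - 1) * Real.exp (-t)

/-- The upper incomplete gamma function. -/
noncomputable def upperGamma (p x : ℝ) : ℝ := ∫ t in Set.Ioi x, t ^ (p - 1) * Real.exp (-t)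

/-- The sign function used in the paper: `1` for `c ≥ 0`, `-1` for `c < 0`. -/
noncomputable def Sgn (c : ℝ) : ℝ := if 0 ≤ c then 1 else -1

/-! On each side of the kink `z = -c` the loss `L(z + c)` is linear in `z`, with slope `k₁` above
and `-k₂` below, so both moments of `L(z + c)` reduce to moments of the density over the whole
line and over the half-line `z ≤ -c`. For `c ≥ 0`, reflecting `z ↦ -z` turns the latter into
moments over `z > c`, and the substitution `z = b t ^ a` identifies those with upper incomplete
gamma values at `(c / b) ^ (1 / a)`; over the whole line they are complete gamma values, the odd
ones vanishing. The lower incomplete gamma functions of the formula enter through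
`γ + Γ-upper = Γ`. For `c < 0` the same reflection swaps `k₁` with `k₂` and `c` with `-c`, which
leaves the formula invariant. -/

open Set

lemma integrableOn_Ioi_gammaIntegrand {p x : ℝ} (hp : 0 < p) (hx : 0 ≤ x) :
    IntegrableOn (fun t : ℝ => t ^ (p - 1) * exp (-t)) (Ioi x) :=
  ((GammaIntegral_convergent hp).mono_set (Ioi_subset_Ioi hx)).congr_fun
    (fun _ _ => mul_comm _ _) measurableSet_Ioi

lemma lowerGamma_add_upperGamma {p x : ℝ} (hp : 0 < p) (hx : 0 ≤ x) :
    lowerGamma p x + upperGamma p x = Gamma p := by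
  have hIoc : IntegrableOn (fun t : ℝ => t ^ (p - 1) * exp (-t)) (Ioc 0 x) :=
    (integrableOn_Ioi_gammaIntegrand hp le_rfl).mono_set Ioc_subset_Ioi_self
  rw [Gamma_eq_integral hp, lowerGamma, upperGamma, intervalIntegral.integral_of_le hx,
    ← setIntegral_union (Ioc_disjoint_Ioi le_rfl) measurableSet_Ioi hIoc
      (integrableOn_Ioi_gammaIntegrand hp hx), Ioc_union_Ioi_eq_Ioi hx]
  exact setIntegral_congr_fun measurableSet_Ioi fun _ _ => mul_comm _ _

lemma upperGamma_zero {p : ℝ} (hp : 0 < p) : upperGamma p 0 = Gamma p := by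
  simpa [lowerGamma] using lowerGamma_add_upperGamma hp le_rfl

lemma strictMonoOn_mul_rpow {a b : ℝ} (ha : 0 < a) (hb : 0 < b) :
    StrictMonoOn (fun t : ℝ => b * t ^ a) (Ici 0) :=
  fun _ hs _ _ hst => mul_lt_mul_of_pos_left (rpow_lt_rpow hs hst ha) hb

lemma image_mul_rpow_Ioi {a b x : ℝ} (ha : 0 < a) (hb : 0 < b) (hx : 0 ≤ x) :
    (fun t : ℝ => b * t ^ a) '' Ioi x = Ioi (b * x ^ a) :=
  ContinuousOn.image_Ioi_of_strictMonoOn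
    (fun t _ => ((continuousAt_rpow_const t a (Or.inr ha.le)).const_mul b).continuousWithinAt)
    ((strictMonoOn_mul_rpow ha hb).mono (Ici_subset_Ici.mpr hx))
    ((tendsto_rpow_atTop ha).const_mul_atTop hb)

lemma hasDerivWithinAt_mul_rpow {a b x : ℝ} (hx : 0 ≤ x) :
    ∀ t ∈ Ioi x, HasDerivWithinAt (fun s : ℝ => b * s ^ a) (b * (a * t ^ (a - 1))) (Ioi x) t :=
  fun _ ht => ((hasDerivAt_rpow_const (Or.inl (hx.trans_lt ht).ne')).const_mul b).hasDerivWithinAt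

lemma abs_mul_mul_rpow_sub_one {a b t : ℝ} (ha : 0 < a) (hb : 0 < b) (ht : 0 < t) :
    |b * (a * t ^ (a - 1))| = a * b * t ^ (a - 1) := by
  rw [abs_of_pos (by positivity)]
  ring

lemma setIntegral_Ioi_comp_mul_rpow {E : Type*} [NormedAddCommGroup E] [NormedSpace ℝ E]
    {a b x : ℝ} (ha : 0 < a) (hb : 0 < b) (hx : 0 ≤ x) (g : ℝ → E) :
    ∫ z in Ioi (b * x ^ a), g z = ∫ t in Ioi x, (a * b * t ^ (a - 1)) • g (b * t ^ a) := by
  rw [← image_mul_rpow_Ioi ha hb hx, integral_image_eq_integral_abs_deriv_smul measurableSet_Ioi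
    (hasDerivWithinAt_mul_rpow hx) ((strictMonoOn_mul_rpow ha hb).mono (Ioi_subset_Ici hx)).injOn]
  exact setIntegral_congr_fun measurableSet_Ioi fun t ht => by
    rw [abs_mul_mul_rpow_sub_one ha hb (hx.trans_lt ht)]

lemma integrableOn_Ioi_comp_mul_rpow_iff {E : Type*} [NormedAddCommGroup E] [NormedSpace ℝ E]
    {a b x : ℝ} (ha : 0 < a) (hb : 0 < b) (hx : 0 ≤ x) (g : ℝ → E) :
    IntegrableOn g (Ioi (b * x ^ a)) ↔
      IntegrableOn (fun t => (a * b * t ^ (a - 1)) • g (b * t ^ a)) (Ioi x) := by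
  rw [← image_mul_rpow_Ioi ha hb hx, integrableOn_image_iff_integrableOn_abs_deriv_smul
    measurableSet_Ioi (hasDerivWithinAt_mul_rpow hx)
    ((strictMonoOn_mul_rpow ha hb).mono (Ioi_subset_Ici hx)).injOn]
  exact integrableOn_congr_fun (fun t ht => by
    rw [abs_mul_mul_rpow_sub_one ha hb (hx.trans_lt ht)]) measurableSet_Ioi

lemma mul_rpow_one_div_div_rpow {a b c : ℝ} (ha : a ≠ 0) (hb : 0 < b) (hc : 0 ≤ c) :
    b * ((c / b) ^ (1 / a)) ^ a = c := by
  rw [one_div, rpow_inv_rpow (by positivity) ha, mul_div_cancel₀ _ hb.ne']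

lemma integrableOn_Iic_of_comp_neg {E : Type*} [NormedAddCommGroup E] {g : ℝ → E} {c : ℝ}
    (h : IntegrableOn (fun z => g (-z)) (Ioi c)) : IntegrableOn g (Iic (-c)) := by
  rw [← Measure.map_neg_eq_self (volume : Measure ℝ),
    measurableEmbedding_neg.integrableOn_map_iff]
  simpa [neg_preimage, Function.comp_def] using
    (integrableOn_Ici_iff_integrableOn_Ioi (f := fun z => g (-z))).mpr h

lemma asymLoss_of_nonpos (k₁ k₂ : ℝ) {w : ℝ} (hw : w ≤ 0) : asymLoss k₁ k₂ w = -k₂ * w := by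
  rcases hw.lt_or_eq with hw | rfl
  · exact if_neg hw.not_ge
  · simp [asymLoss]

lemma asymLoss_neg (k₁ k₂ w : ℝ) : asymLoss k₁ k₂ (-w) = asymLoss k₂ k₁ w := by
  rcases le_total 0 w with hw | hw
  · rw [asymLoss_of_nonpos k₁ k₂ (neg_nonpos.mpr hw), asymLoss, if_pos hw]
    ring
  · rw [asymLoss, if_pos (neg_nonneg.mpr hw), asymLoss_of_nonpos k₂ k₁ hw]
    ring

lemma integral_asymLoss_add_pow_mul (k₁ k₂ c : ℝ) (n : ℕ) {g : ℝ → ℝ}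
    (hg : Integrable fun z => (z + c) ^ n * g z) :
    ∫ z, asymLoss k₁ k₂ (z + c) ^ n * g z
      = k₁ ^ n * (∫ z, (z + c) ^ n * g z)
        - (k₁ ^ n - (-k₂) ^ n) * ∫ z in Iic (-c), (z + c) ^ n * g z := by
  have hpt : ∀ z, asymLoss k₁ k₂ (z + c) ^ n * g z
      = k₁ ^ n * ((z + c) ^ n * g z)
        - (k₁ ^ n - (-k₂) ^ n) * (Iic (-c)).indicator (fun z => (z + c) ^ n * g z) z := by
    intro z
    by_cases hz : z ∈ Iic (-c)
    · rw [indicator_of_mem hz, asymLoss_of_nonpos k₁ k₂ (by rw [mem_Iic] at hz; linarith),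
        mul_pow]
      ring
    · rw [indicator_of_notMem hz, asymLoss, if_pos (by rw [mem_Iic] at hz; linarith), mul_pow]
      ring
  simp_rw [hpt]
  rw [integral_sub (hg.const_mul _) ((hg.indicator measurableSet_Iic).const_mul _),
    integral_const_mul, integral_const_mul, integral_indicator measurableSet_Iic]

lemma integral_comp_asymLoss_add_mul_of_even (φ : ℝ → ℝ) {g : ℝ → ℝ} (hg : ∀ z, g (-z) = g z)
    (k₁ k₂ c : ℝ) :
    ∫ z, φ (asymLoss k₁ k₂ (z + c)) * g z = ∫ z, φ (asymLoss k₂ k₁ (z + -c)) * g z := by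
  rw [← integral_neg_eq_self]
  congr 1 with z
  rw [hg, show -z + c = -(z + -c) by ring, asymLoss_neg]

lemma genGauss_neg (a b z : ℝ) : genGauss a b (-z) = genGauss a b z := by
  rw [genGauss, genGauss, neg_div, abs_neg]

lemma neg_pow_mul_genGauss_neg (a b z : ℝ) (n : ℕ) :
    (-z) ^ n * genGauss a b (-z) = (-1) ^ n * (z ^ n * genGauss a b z) := by
  rw [genGauss_neg, neg_pow]
  ring

lemma pow_mul_genGauss_comp_mul_rpow {a b t : ℝ} (ha : 0 < a) (hb : 0 < b) (ht : 0 < t) (n : ℕ) :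
    (a * b * t ^ (a - 1)) • ((b * t ^ a) ^ n * genGauss a b (b * t ^ a))
      = b ^ n / (2 * Gamma a) * (t ^ ((n + 1) * a - 1) * exp (-t)) := by
  have hexp : |b * t ^ a / b| ^ (1 / a) = t := by
    rw [mul_div_cancel_left₀ _ hb.ne', abs_of_nonneg (rpow_nonneg ht.le a), one_div,
      rpow_rpow_inv ht.le ha.ne']
  have hpow : t ^ (a - 1) * (t ^ a) ^ n = t ^ ((n + 1) * a - 1) := by
    rw [← rpow_natCast, ← rpow_mul ht.le, ← rpow_add ht]
    ring_nf
  rw [smul_eq_mul, genGauss, hexp, mul_pow, ← hpow]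
  field_simp

lemma integrableOn_Ioi_pow_mul_genGauss {a b c : ℝ} (ha : 0 < a) (hb : 0 < b) (hc : 0 ≤ c)
    (n : ℕ) : IntegrableOn (fun z => z ^ n * genGauss a b z) (Ioi c) := by
  have hx : 0 ≤ (c / b) ^ (1 / a) := by positivity
  rw [← mul_rpow_one_div_div_rpow ha.ne' hb hc, integrableOn_Ioi_comp_mul_rpow_iff ha hb hx]
  exact IntegrableOn.congr_fun
    ((integrableOn_Ioi_gammaIntegrand (by positivity) hx).const_mul (b ^ n / (2 * Gamma a)))
    (fun t ht => (pow_mul_genGauss_comp_mul_rpow ha hb (hx.trans_lt ht) n).symm) measurableSet_Ioi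

lemma setIntegral_Ioi_pow_mul_genGauss {a b c : ℝ} (ha : 0 < a) (hb : 0 < b) (hc : 0 ≤ c)
    (n : ℕ) :
    ∫ z in Ioi c, z ^ n * genGauss a b z
      = b ^ n / (2 * Gamma a) * upperGamma ((n + 1) * a) ((c / b) ^ (1 / a)) := by
  have hx : 0 ≤ (c / b) ^ (1 / a) := by positivity
  conv_lhs => rw [← mul_rpow_one_div_div_rpow ha.ne' hb hc, setIntegral_Ioi_comp_mul_rpow ha hb hx]
  rw [upperGamma, ← integral_const_mul]
  exact setIntegral_congr_fun measurableSet_Ioi fun t ht =>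
    pow_mul_genGauss_comp_mul_rpow ha hb (hx.trans_lt ht) n

lemma integrable_pow_mul_genGauss {a b : ℝ} (ha : 0 < a) (hb : 0 < b) (n : ℕ) :
    Integrable (fun z => z ^ n * genGauss a b z) := by
  have hIoi := integrableOn_Ioi_pow_mul_genGauss ha hb le_rfl n
  have hIic : IntegrableOn (fun z => z ^ n * genGauss a b z) (Iic 0) := by
    simpa using integrableOn_Iic_of_comp_neg (c := 0)
      (IntegrableOn.congr_fun (hIoi.const_mul ((-1) ^ n))
        (fun z _ => (neg_pow_mul_genGauss_neg a b z n).symm) measurableSet_Ioi)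
  simpa using hIic.union hIoi

lemma integral_pow_mul_genGauss {a b : ℝ} (ha : 0 < a) (hb : 0 < b) (n : ℕ) :
    ∫ z, z ^ n * genGauss a b z
      = (1 + (-1) ^ n) * (b ^ n / (2 * Gamma a)) * Gamma ((n + 1) * a) := by
  have hIoi := setIntegral_Ioi_pow_mul_genGauss ha hb le_rfl n
  rw [zero_div, zero_rpow (one_div_ne_zero ha.ne'), upperGamma_zero (by positivity)] at hIoi
  have hint := integrable_pow_mul_genGauss ha hb n
  rw [← intervalIntegral.integral_Iic_add_Ioi (b := 0) hint.integrableOn hint.integrableOn,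
    ← neg_zero, ← integral_comp_neg_Ioi]
  simp_rw [neg_pow_mul_genGauss_neg]
  rw [integral_const_mul, neg_zero, hIoi]
  ring

lemma integrable_add_mul_genGauss {a b : ℝ} (ha : 0 < a) (hb : 0 < b) (c : ℝ) :
    Integrable (fun z => (z + c) * genGauss a b z) :=
  ((integrable_pow_mul_genGauss ha hb 1).add
    ((integrable_pow_mul_genGauss ha hb 0).const_mul c)).congr
    (Eventually.of_forall fun z => by simp only [Pi.add_apply]; ring)

lemma integrable_add_sq_mul_genGauss {a b : ℝ} (ha : 0 < a) (hb : 0 < b) (c : ℝ) :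
    Integrable (fun z => (z + c) ^ 2 * genGauss a b z) :=
  (((integrable_pow_mul_genGauss ha hb 2).add
    ((integrable_pow_mul_genGauss ha hb 1).const_mul (2 * c))).add
    ((integrable_pow_mul_genGauss ha hb 0).const_mul (c ^ 2))).congr
    (Eventually.of_forall fun z => by simp only [Pi.add_apply]; ring)

lemma integral_add_mul_genGauss {a b : ℝ} (ha : 0 < a) (hb : 0 < b) (c : ℝ) :
    ∫ z, (z + c) * genGauss a b z = c := by
  have hG : Gamma a ≠ 0 := (Gamma_pos_of_pos ha).ne'
  calc ∫ z, (z + c) * genGauss a b z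
      = ∫ z, z ^ 1 * genGauss a b z + c * (z ^ 0 * genGauss a b z) :=
        integral_congr_ae (Eventually.of_forall fun z => by simp only; ring)
    _ = c := by
        rw [integral_add (integrable_pow_mul_genGauss ha hb 1)
          ((integrable_pow_mul_genGauss ha hb 0).const_mul c), integral_const_mul,
          integral_pow_mul_genGauss ha hb, integral_pow_mul_genGauss ha hb]
        norm_num
        field_simp

lemma integral_add_sq_mul_genGauss {a b : ℝ} (ha : 0 < a) (hb : 0 < b) (c : ℝ) :
    ∫ z, (z + c) ^ 2 * genGauss a b z = c ^ 2 + b ^ 2 * Gamma (3 * a) / Gamma a := by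
  have hG : Gamma a ≠ 0 := (Gamma_pos_of_pos ha).ne'
  calc ∫ z, (z + c) ^ 2 * genGauss a b z
      = ∫ z, z ^ 2 * genGauss a b z + 2 * c * (z ^ 1 * genGauss a b z)
          + c ^ 2 * (z ^ 0 * genGauss a b z) :=
        integral_congr_ae (Eventually.of_forall fun z => by simp only; ring)
    _ = c ^ 2 + b ^ 2 * Gamma (3 * a) / Gamma a := by
        have h₀ := integrable_pow_mul_genGauss ha hb 0
        have h₁ := integrable_pow_mul_genGauss ha hb 1
        have h₂ := integrable_pow_mul_genGauss ha hb 2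
        rw [integral_add ?_ (h₀.const_mul _), integral_add h₂ (h₁.const_mul _),
          integral_const_mul, integral_const_mul, integral_pow_mul_genGauss ha hb,
          integral_pow_mul_genGauss ha hb, integral_pow_mul_genGauss ha hb]
        · norm_num
          field_simp
          ring
        · exact h₂.add (h₁.const_mul _)

lemma setIntegral_Iic_add_mul_genGauss {a b : ℝ} (ha : 0 < a) (hb : 0 < b) {c : ℝ} (hc : 0 ≤ c) :
    ∫ z in Iic (-c), (z + c) * genGauss a b z
      = (c * upperGamma a ((c / b) ^ (1 / a)) - b * upperGamma (2 * a) ((c / b) ^ (1 / a)))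
        / (2 * Gamma a) := by
  rw [← integral_comp_neg_Ioi]
  calc ∫ z in Ioi c, (-z + c) * genGauss a b (-z)
      = ∫ z in Ioi c, c * (z ^ 0 * genGauss a b z) - z ^ 1 * genGauss a b z :=
        setIntegral_congr_fun measurableSet_Ioi fun z _ => by rw [genGauss_neg]; ring
    _ = _ := by
        rw [integral_sub ((integrableOn_Ioi_pow_mul_genGauss ha hb hc 0).const_mul c)
            (integrableOn_Ioi_pow_mul_genGauss ha hb hc 1), integral_const_mul,
          setIntegral_Ioi_pow_mul_genGauss ha hb hc, setIntegral_Ioi_pow_mul_genGauss ha hb hc]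
        norm_num
        ring

lemma setIntegral_Iic_add_sq_mul_genGauss {a b : ℝ} (ha : 0 < a) (hb : 0 < b) {c : ℝ} (hc : 0 ≤ c) :
    ∫ z in Iic (-c), (z + c) ^ 2 * genGauss a b z
      = (b ^ 2 * upperGamma (3 * a) ((c / b) ^ (1 / a))
          - 2 * c * b * upperGamma (2 * a) ((c / b) ^ (1 / a))
          + c ^ 2 * upperGamma a ((c / b) ^ (1 / a))) / (2 * Gamma a) := by
  rw [← integral_comp_neg_Ioi]
  calc ∫ z in Ioi c, (-z + c) ^ 2 * genGauss a b (-z)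
      = ∫ z in Ioi c, z ^ 2 * genGauss a b z - 2 * c * (z ^ 1 * genGauss a b z)
          + c ^ 2 * (z ^ 0 * genGauss a b z) :=
        setIntegral_congr_fun measurableSet_Ioi fun z _ => by rw [genGauss_neg]; ring
    _ = _ := by
        have h₀ := integrableOn_Ioi_pow_mul_genGauss ha hb hc 0
        have h₁ := integrableOn_Ioi_pow_mul_genGauss ha hb hc 1
        have h₂ := integrableOn_Ioi_pow_mul_genGauss ha hb hc 2
        rw [integral_add ?_ (h₀.const_mul _), integral_sub h₂ (h₁.const_mul _),
          integral_const_mul, integral_const_mul, setIntegral_Ioi_pow_mul_genGauss ha hb hc,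
          setIntegral_Ioi_pow_mul_genGauss ha hb hc, setIntegral_Ioi_pow_mul_genGauss ha hb hc]
        · norm_num
          ring
        · exact h₂.sub (h₁.const_mul _)

lemma integral_asymLoss_add_mul_genGauss {a b : ℝ} (ha : 0 < a) (hb : 0 < b) (k₁ k₂ : ℝ)
    {c : ℝ} (hc : 0 ≤ c) :
    ∫ z, asymLoss k₁ k₂ (z + c) * genGauss a b z
      = k₁ * c - (k₁ + k₂) * (c * upperGamma a ((c / b) ^ (1 / a))
          - b * upperGamma (2 * a) ((c / b) ^ (1 / a))) / (2 * Gamma a) := by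
  have h := integral_asymLoss_add_pow_mul k₁ k₂ c 1
    (by simpa only [pow_one] using integrable_add_mul_genGauss ha hb c)
  simp only [pow_one] at h
  rw [h, integral_add_mul_genGauss ha hb, setIntegral_Iic_add_mul_genGauss ha hb hc]
  ring

lemma integral_asymLoss_add_sq_mul_genGauss {a b : ℝ} (ha : 0 < a) (hb : 0 < b) (k₁ k₂ : ℝ)
    {c : ℝ} (hc : 0 ≤ c) :
    ∫ z, asymLoss k₁ k₂ (z + c) ^ 2 * genGauss a b z
      = k₁ ^ 2 * (c ^ 2 + b ^ 2 * Gamma (3 * a) / Gamma a)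
        - (k₁ ^ 2 - k₂ ^ 2) * (b ^ 2 * upperGamma (3 * a) ((c / b) ^ (1 / a))
          - 2 * c * b * upperGamma (2 * a) ((c / b) ^ (1 / a))
          + c ^ 2 * upperGamma a ((c / b) ^ (1 / a))) / (2 * Gamma a) := by
  rw [integral_asymLoss_add_pow_mul k₁ k₂ c 2 (integrable_add_sq_mul_genGauss ha hb c),
    integral_add_sq_mul_genGauss ha hb, setIntegral_Iic_add_sq_mul_genGauss ha hb hc]
  ring

theorem variance_shifted_loss_general (a b k₁ k₂ : ℝ) (ha : 0 < a) (hb : 0 < b)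
    (c : ℝ) :
    (∫ z, (asymLoss k₁ k₂ (z + c)) ^ 2 * genGauss a b z)
      - (∫ z, asymLoss k₁ k₂ (z + c) * genGauss a b z) ^ 2 =
      (k₁ + k₂) ^ 2 * c ^ 2 / 4
      + (k₁ ^ 2 - k₂ ^ 2) * b * c / (2 * Real.Gamma a)
          * upperGamma (2 * a) (|c / b| ^ (1 / a))
      - (k₁ + k₂) ^ 2 * b * |c| / (2 * Real.Gamma a ^ 2)
          * lowerGamma a (|c / b| ^ (1 / a)) * upperGamma (2 * a) (|c / b| ^ (1 / a))
      - (k₁ + k₂) ^ 2 * c ^ 2 / (4 * Real.Gamma a ^ 2)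
          * (lowerGamma a (|c / b| ^ (1 / a))) ^ 2
      - (k₁ + k₂) ^ 2 * b ^ 2 / (4 * Real.Gamma a ^ 2)
          * (upperGamma (2 * a) (|c / b| ^ (1 / a))) ^ 2
      + (k₁ ^ 2 + k₂ ^ 2) * b ^ 2 * Real.Gamma (3 * a) / (2 * Real.Gamma a)
      + Sgn c * ((k₁ ^ 2 - k₂ ^ 2) * b ^ 2 / (2 * Real.Gamma a))
          * lowerGamma (3 * a) (|c / b| ^ (1 / a)) := by
  wlog hc : 0 ≤ c generalizing k₁ k₂ c
  · have h := this k₂ k₁ (-c) (by linarith)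
    have hL := integral_comp_asymLoss_add_mul_of_even id (genGauss_neg a b) k₁ k₂ c
    have hL₂ := integral_comp_asymLoss_add_mul_of_even (· ^ 2) (genGauss_neg a b) k₁ k₂ c
    simp only [id] at hL hL₂
    rw [hL, hL₂, h, neg_div, abs_neg, abs_neg, Sgn, Sgn, if_pos (by linarith), if_neg hc]
    ring
  have hx : 0 ≤ (c / b) ^ (1 / a) := by positivity
  rw [integral_asymLoss_add_mul_genGauss ha hb k₁ k₂ hc,
    integral_asymLoss_add_sq_mul_genGauss ha hb k₁ k₂ hc, abs_of_nonneg (div_nonneg hc hb.le),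
    abs_of_nonneg hc, Sgn, if_pos hc,
    eq_sub_of_add_eq (lowerGamma_add_upperGamma ha hx),
    eq_sub_of_add_eq (lowerGamma_add_upperGamma (by positivity : 0 < 3 * a) hx)]
  have hG : Gamma a ≠ 0 := (Gamma_pos_of_pos ha).ne'
  field_simp
  ring

theorem variance_shifted_loss (a b k₁ k₂ : ℝ) (ha : 0 < a) (hb : 0 < b)
    (hk₁ : 0 < k₁) (hk₂ : 0 < k₂) (c : ℝ) :
    (∫ z, (asymLoss k₁ k₂ (z + c)) ^ 2 * genGauss a b z)
      - (∫ z, asymLoss k₁ k₂ (z + c) * genGauss a b z) ^ 2 =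
      (k₁ + k₂) ^ 2 * c ^ 2 / 4
      + (k₁ ^ 2 - k₂ ^ 2) * b * c / (2 * Real.Gamma a)
          * upperGamma (2 * a) (|c / b| ^ (1 / a))
      - (k₁ + k₂) ^ 2 * b * |c| / (2 * Real.Gamma a ^ 2)
          * lowerGamma a (|c / b| ^ (1 / a)) * upperGamma (2 * a) (|c / b| ^ (1 / a))
      - (k₁ + k₂) ^ 2 * c ^ 2 / (4 * Real.Gamma a ^ 2)
          * (lowerGamma a (|c / b| ^ (1 / a))) ^ 2
      - (k₁ + k₂) ^ 2 * b ^ 2 / (4 * Real.Gamma a ^ 2)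
          * (upperGamma (2 * a) (|c / b| ^ (1 / a))) ^ 2
      + (k₁ ^ 2 + k₂ ^ 2) * b ^ 2 * Real.Gamma (3 * a) / (2 * Real.Gamma a)
      + Sgn c * ((k₁ ^ 2 - k₂ ^ 2) * b ^ 2 / (2 * Real.Gamma a))
          * lowerGamma (3 * a) (|c / b| ^ (1 / a)) :=
  variance_shifted_loss_general a b k₁ k₂ ha hb c
end

section
/- If a real number C satisfies γ(a, |C/b|^{1/a}) = Sgn(C)·((k₂ − k₁)/(k₁ + k₂))·Γ(a), then ∫ L(z)·f(z) dz − ∫ L(z + C)·f(z) dz = ((k₁ + k₂)·b / (2·Γ(a)))·γ(2a, |C/b|^{1/a}). -/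
/-!
Write `L(z) = k₁ z + (k₁ + k₂) max(-z, 0)`. For an even density `f` of mass one the mean
vanishes, and reflecting `z ↦ -z` turns the `max` term into a tail integral, so
`∫ L(z + C) f(z) dz = k₁ C + (k₁ + k₂) ∫_{z > C} (z - C) f(z) dz`. Comparing `C` with `0`
gives, for every symmetric density,
`∫ L f - ∫ L(· + C) f = (k₁ + k₂) ∫_0^C z f + C ((k₂ - k₁)/2 - (k₁ + k₂) ∫_0^C f)`.
For the generalized Gaussian the substitution `z = b t^a` gives
`∫_0^C f = Sgn C · γ(a, |C/b|^{1/a}) / (2Γ(a))` and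
`∫_0^C z f = b γ(2a, |C/b|^{1/a}) / (2Γ(a))`,
so the hypothesis on `C` says exactly that the second term vanishes.
-/

open Real MeasureTheory Filter

open Set

lemma asymLoss_eq_mul_add_max (k₁ k₂ z : ℝ) :
    asymLoss k₁ k₂ z = k₁ * z + (k₁ + k₂) * max (-z) 0 := by
  unfold asymLoss
  split_ifs with hz
  · rw [max_eq_right (by linarith)]; ring
  · rw [max_eq_left (by linarith)]; ring

lemma max_neg_add_mul_eq_indicator (g : ℝ → ℝ) (c x : ℝ) :
    max (-(x + c)) 0 * g x = (Iic (-c)).indicator (fun x => -(x + c) * g x) x := by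
  by_cases hx : x ≤ -c
  · rw [indicator_of_mem (show x ∈ Iic (-c) from hx), max_eq_left (by linarith)]
  · rw [indicator_of_notMem (show x ∉ Iic (-c) from hx), max_eq_right (by linarith), zero_mul]

section Even

variable {f : ℝ → ℝ}

lemma integral_id_mul_eq_zero_of_even (hf : f.Even) : ∫ x, x * f x = 0 := by
  have h := integral_neg_eq_self (fun x => x * f x) volume
  simp only [hf.eq, neg_mul, integral_neg] at h
  linarith

lemma integral_Ioi_zero_eq_half_of_even (hf : f.Even) : ∫ x in Ioi 0, f x = (∫ x, f x) / 2 := by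
  have h : ∀ x, f |x| = f x := fun x => by
    rcases abs_choice x with hx | hx <;> simp only [hx, hf.eq]
  have hfold := integral_comp_abs (f := f)
  simp only [h] at hfold
  linarith

lemma intervalIntegral_eq_Sgn_mul_of_even (hf : f.Even) (c : ℝ) :
    ∫ x in 0..c, f x = Sgn c * ∫ x in 0..|c|, f x := by
  unfold Sgn
  rcases le_or_gt 0 c with hc | hc
  · rw [if_pos hc, abs_of_nonneg hc, one_mul]
  · have h := intervalIntegral.integral_comp_neg (a := 0) (b := -c) f
    simp only [hf.eq, neg_neg, neg_zero] at h
    rw [if_neg hc.not_ge, abs_of_neg hc, h, intervalIntegral.integral_symm, neg_one_mul]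

lemma intervalIntegral_id_mul_eq_abs_of_even (hf : f.Even) (c : ℝ) :
    ∫ x in 0..c, x * f x = ∫ x in 0..|c|, x * f x := by
  rcases le_or_gt 0 c with hc | hc
  · rw [abs_of_nonneg hc]
  · have h := intervalIntegral.integral_comp_neg (a := 0) (b := -c) fun x => x * f x
    simp only [hf.eq, neg_neg, neg_zero, neg_mul, intervalIntegral.integral_neg] at h
    rw [abs_of_neg hc, intervalIntegral.integral_symm, ← h, neg_neg]

lemma integral_asymLoss_add_mul_of_even (hf : f.Even) (hfi : Integrable f)
    (hxfi : Integrable fun x => x * f x) (k₁ k₂ c : ℝ) :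
    ∫ x, asymLoss k₁ k₂ (x + c) * f x
      = k₁ * c * (∫ x, f x) + (k₁ + k₂) * ∫ x in Ioi c, (x - c) * f x := by
  have hmean : Integrable fun x => (x + c) * f x := by
    refine (hxfi.add (hfi.const_mul c)).congr (Eventually.of_forall fun x => ?_)
    simp only [Pi.add_apply]; ring
  have hreflected : Integrable fun x => -(x + c) * f x := by
    simpa only [neg_mul] using hmean.fun_neg
  have hsplit : ∀ x, asymLoss k₁ k₂ (x + c) * f x
      = k₁ * ((x + c) * f x) + (k₁ + k₂) * (Iic (-c)).indicator (fun x => -(x + c) * f x) x :=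
    fun x => by rw [asymLoss_eq_mul_add_max, ← max_neg_add_mul_eq_indicator]; ring
  have htail : ∫ x in Iic (-c), -(x + c) * f x = ∫ x in Ioi c, (x - c) * f x := by
    rw [← integral_comp_neg_Ioi]
    refine setIntegral_congr_fun measurableSet_Ioi fun x _ => ?_
    rw [hf.eq]; ring
  have hmean_eq : ∫ x, (x + c) * f x = c * ∫ x, f x := by
    simp_rw [add_mul]
    rw [integral_add hxfi (hfi.const_mul c), integral_const_mul,
      integral_id_mul_eq_zero_of_even hf, zero_add]
  simp_rw [hsplit]
  rw [integral_add (hmean.const_mul k₁) ((hreflected.indicator measurableSet_Iic).const_mul _),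
    integral_const_mul, integral_const_mul, integral_indicator measurableSet_Iic, htail, hmean_eq]
  ring

theorem integral_asymLoss_sub_integral_asymLoss_add_of_even (hf : f.Even) (hfi : Integrable f)
    (hxfi : Integrable fun x => x * f x) (hmass : ∫ x, f x = 1) (k₁ k₂ c : ℝ) :
    (∫ x, asymLoss k₁ k₂ x * f x) - ∫ x, asymLoss k₁ k₂ (x + c) * f x
      = (k₁ + k₂) * (∫ x in 0..c, x * f x)
        + c * ((k₂ - k₁) / 2 - (k₁ + k₂) * ∫ x in 0..c, f x) := by
  have hzero := integral_asymLoss_add_mul_of_even hf hfi hxfi k₁ k₂ 0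
  simp only [add_zero, sub_zero] at hzero
  have htail :
      ∫ x in Ioi c, (x - c) * f x = (∫ x in Ioi c, x * f x) - c * ∫ x in Ioi c, f x := by
    simp_rw [sub_mul]
    rw [integral_sub hxfi.integrableOn (hfi.integrableOn.const_mul c), integral_const_mul]
  have hmoment := intervalIntegral.integral_Ioi_sub_Ioi' hxfi.integrableOn hxfi.integrableOn
    (a := 0) (b := c)
  have hhalf := intervalIntegral.integral_Ioi_sub_Ioi' hfi.integrableOn hfi.integrableOn
    (a := 0) (b := c)
  rw [integral_Ioi_zero_eq_half_of_even hf, hmass] at hhalf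
  rw [hzero, integral_asymLoss_add_mul_of_even hf hfi hxfi, htail, hmass]
  linear_combination (k₁ + k₂) * hmoment - (k₁ + k₂) * c * hhalf

end Even

lemma integrable_of_integrableOn_Ioi_of_comp_neg {E : Type*} [NormedAddCommGroup E] {g : ℝ → E}
    (hpos : IntegrableOn g (Ioi 0)) (hneg : IntegrableOn (fun x => g (-x)) (Ioi 0)) :
    Integrable g := by
  have hneg' : IntegrableOn g (Iic 0) := by
    have hemb : MeasurableEmbedding fun x : ℝ => -x := (Homeomorph.neg ℝ).measurableEmbedding
    rw [IntegrableOn, ← Measure.map_neg_eq_self (volume : Measure ℝ), ← IntegrableOn,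
      hemb.integrableOn_map_iff]
    simpa [Function.comp_def, neg_preimage] using (integrableOn_Ici_iff_integrableOn_Ioi).2 hneg
  rw [← integrableOn_univ, ← Iic_union_Ioi (a := 0)]
  exact hneg'.union hpos

theorem intervalIntegral_comp_rpow_of_pos {E : Type*} [NormedAddCommGroup E] [NormedSpace ℝ E]
    {g : ℝ → E} {p c : ℝ} (hp : 0 < p) (hc : 0 ≤ c) (hg : IntegrableOn g (Ioi 0)) :
    ∫ x in 0..c ^ p⁻¹, (p * x ^ (p - 1)) • g (x ^ p) = ∫ y in 0..c, g y := by
  have hg' : IntegrableOn (fun x => (p * x ^ (p - 1)) • g (x ^ p)) (Ioi 0) := by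
    simpa only [abs_of_pos hp] using (integrableOn_Ioi_comp_rpow_iff g hp.ne').2 hg
  rw [← intervalIntegral.integral_Ioi_sub_Ioi hg hc,
    ← intervalIntegral.integral_Ioi_sub_Ioi hg' (by positivity),
    integral_comp_rpow_Ioi_of_pos hp, integral_comp_rpow_Ioi_of_pos' hp hc]

lemma intervalIntegral_rpow_mul_exp_neg_rpow_inv {a q c : ℝ} (ha : 0 < a) (hq : -1 < q)
    (hc : 0 ≤ c) :
    ∫ y in 0..c, y ^ q * exp (-y ^ a⁻¹) = a * lowerGamma (a * (q + 1)) (c ^ a⁻¹) := by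
  rw [← intervalIntegral_comp_rpow_of_pos ha hc
      (integrableOn_rpow_mul_exp_neg_rpow hq (inv_pos.2 ha)), lowerGamma,
    ← intervalIntegral.integral_const_mul]
  refine intervalIntegral.integral_congr_ae (Eventually.of_forall fun x hx => ?_)
  rw [uIoc_of_le (by positivity)] at hx
  have hx : 0 < x := hx.1
  rw [smul_eq_mul, ← rpow_mul hx.le, ← rpow_mul hx.le, mul_inv_cancel₀ ha.ne', rpow_one,
    show a * (q + 1) - 1 = (a - 1) + a * q by ring, rpow_add hx]
  ring

lemma genGauss_even (a b : ℝ) : (genGauss a b).Even := fun z => by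
  simp [genGauss, neg_div, abs_neg]

section GenGauss

variable {a b : ℝ}

lemma rpow_mul_genGauss_of_nonneg (hb : 0 < b) (q : ℝ) {x : ℝ} (hx : 0 ≤ x) :
    x ^ q * genGauss a b x
      = (2 * a * b * Gamma a)⁻¹ * b ^ q * ((x / b) ^ q * exp (-(x / b) ^ (1 / a))) := by
  rw [genGauss, abs_of_nonneg (div_nonneg hx hb.le), div_rpow hx hb.le q]
  field_simp

lemma intervalIntegral_rpow_mul_genGauss (ha : 0 < a) (hb : 0 < b) {q s : ℝ} (hq : -1 < q)
    (hs : 0 ≤ s) :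
    ∫ x in 0..s, x ^ q * genGauss a b x
      = b ^ q * lowerGamma (a * (q + 1)) ((s / b) ^ (1 / a)) / (2 * Gamma a) := by
  rw [intervalIntegral.integral_congr fun x hx => rpow_mul_genGauss_of_nonneg hb q
      (by rw [uIcc_of_le hs] at hx; exact hx.1),
    intervalIntegral.integral_const_mul,
    intervalIntegral.integral_comp_div (fun y => y ^ q * exp (-y ^ (1 / a))) hb.ne', zero_div,
    one_div, intervalIntegral_rpow_mul_exp_neg_rpow_inv ha hq (div_nonneg hs hb.le), smul_eq_mul]
  field_simp

lemma integrableOn_Ioi_rpow_mul_genGauss (ha : 0 < a) (hb : 0 < b) {q : ℝ} (hq : -1 < q) :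
    IntegrableOn (fun x => x ^ q * genGauss a b x) (Ioi 0) := by
  have h := (integrableOn_Ioi_comp_mul_left_iff (fun y => y ^ q * exp (-y ^ (1 / a))) 0
    (inv_pos.2 hb)).2 (by simpa using integrableOn_rpow_mul_exp_neg_rpow hq (one_div_pos.2 ha))
  refine IntegrableOn.congr_fun (h.const_mul ((2 * a * b * Gamma a)⁻¹ * b ^ q))
    (fun x hx => ?_) measurableSet_Ioi
  rw [rpow_mul_genGauss_of_nonneg hb q (le_of_lt hx), inv_mul_eq_div b x]

lemma integral_Ioi_genGauss (ha : 0 < a) (hb : 0 < b) :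
    ∫ x in Ioi 0, genGauss a b x = 1 / 2 := by
  calc ∫ x in Ioi 0, genGauss a b x
      = ∫ x in Ioi 0, (2 * a * b * Gamma a)⁻¹ * exp (-(b⁻¹ * x) ^ (1 / a)) :=
        setIntegral_congr_fun measurableSet_Ioi fun x hx => by
          rw [genGauss, abs_of_pos (div_pos hx hb), inv_mul_eq_div b x]
    _ = (2 * a * b * Gamma a)⁻¹ * (b * Gamma (a + 1)) := by
        rw [integral_const_mul,
          integral_comp_mul_left_Ioi (fun y => exp (-y ^ (1 / a))) 0 (inv_pos.2 hb), mul_zero,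
          integral_exp_neg_rpow (one_div_pos.2 ha), one_div_one_div, smul_eq_mul, inv_inv]
    _ = 1 / 2 := by
        rw [Gamma_add_one ha.ne']
        field_simp

lemma integral_genGauss (ha : 0 < a) (hb : 0 < b) : ∫ x, genGauss a b x = 1 := by
  have h := integral_Ioi_zero_eq_half_of_even (genGauss_even a b)
  rw [integral_Ioi_genGauss ha hb] at h
  linarith

lemma integrable_genGauss (ha : 0 < a) (hb : 0 < b) : Integrable (genGauss a b) := by
  have h := integrableOn_Ioi_rpow_mul_genGauss ha hb (q := 0) (by norm_num)
  simp only [rpow_zero, one_mul] at h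
  exact integrable_of_integrableOn_Ioi_of_comp_neg h (by simpa only [(genGauss_even a b).eq])

lemma integrable_id_mul_genGauss (ha : 0 < a) (hb : 0 < b) :
    Integrable fun x => x * genGauss a b x := by
  have h := integrableOn_Ioi_rpow_mul_genGauss ha hb (q := 1) (by norm_num)
  simp only [rpow_one] at h
  refine integrable_of_integrableOn_Ioi_of_comp_neg h ?_
  simpa only [(genGauss_even a b).eq, neg_mul] using h.fun_neg

end GenGauss

lemma Sgn_mul_self (c : ℝ) : Sgn c * Sgn c = 1 := by
  unfold Sgn; split_ifs <;> norm_num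

theorem expected_loss_reduction (a b k₁ k₂ : ℝ) (ha : 0 < a) (hb : 0 < b)
    (hk₁ : 0 < k₁) (hk₂ : 0 < k₂) (C : ℝ)
    (hC : lowerGamma a (|C / b| ^ (1 / a)) = Sgn C * ((k₂ - k₁) / (k₁ + k₂)) * Real.Gamma a) :
    (∫ z, asymLoss k₁ k₂ z * genGauss a b z)
      - (∫ z, asymLoss k₁ k₂ (z + C) * genGauss a b z) =
      (k₁ + k₂) * b / (2 * Real.Gamma a) * lowerGamma (2 * a) (|C / b| ^ (1 / a)) := by
  have heven := genGauss_even a b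
  have hmoment₀ := intervalIntegral_rpow_mul_genGauss ha hb (q := 0) (by norm_num) (abs_nonneg C)
  have hmoment₁ := intervalIntegral_rpow_mul_genGauss ha hb (q := 1) (by norm_num) (abs_nonneg C)
  simp only [rpow_zero, rpow_one, one_mul, zero_add, mul_one, one_add_one_eq_two]
    at hmoment₀ hmoment₁
  rw [abs_div, abs_of_pos hb] at hC ⊢
  rw [integral_asymLoss_sub_integral_asymLoss_add_of_even heven (integrable_genGauss ha hb)
      (integrable_id_mul_genGauss ha hb) (integral_genGauss ha hb),
    intervalIntegral_eq_Sgn_mul_of_even heven, intervalIntegral_id_mul_eq_abs_of_even heven,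
    hmoment₀, hmoment₁, hC, mul_comm a 2]
  field_simp
  linear_combination (k₁ - k₂) * Gamma a * C * Sgn_mul_self C
end

section
/- For every real a > 0 and every real x > 0, we have x^a·γ(a, x)² − x^a·Γ(a)² + 2·γ(a, x)·Γ-upper(2a, x) > 0. -/
open Real MeasureTheory Filter

/-!
Write `L = γ(a, x)`, `U = Γ(a, x)`, `V = Γ(2a, x)` and `y = x^a`. Since `Γ(a) = L + U`, the claim
is `2L(V - yU) > yU²`. Integrating by parts against `e^{-t}` on `(x, ∞)` gives
`aU = ∫ (t^a - y) e^{-t}` and `2a(V - yU) = ∫ (t^a - y)² e^{-t}`, so Cauchy–Schwarz for the weight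
`e^{-t}`, whose mass on `(x, ∞)` is `e^{-x}`, yields `a²U² ≤ 2a e^{-x}(V - yU)`. As `V - yU > 0`,
it remains to see `e^{-x} y < aL`: indeed `aL = a ∫₀ˣ t^{a-1} e^{-t} dt > a ∫₀ˣ t^{a-1} e^{-x} dt`.
-/

open Set Topology

theorem sq_integral_mul_le_integral_mul_integral_sq_mul {X : Type*} [MeasurableSpace X]
    {μ : Measure X} {f w : X → ℝ} (hw : 0 ≤ᵐ[μ] w) (hw_int : Integrable w μ)
    (hfw : Integrable (fun t => f t * w t) μ) (hf2w : Integrable (fun t => f t ^ 2 * w t) μ) :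
    (∫ t, f t * w t ∂μ) ^ 2 ≤ (∫ t, w t ∂μ) * ∫ t, f t ^ 2 * w t ∂μ := by
  have hquad : ∀ c : ℝ, 0 ≤ (∫ t, w t ∂μ) * (c * c) + (-2 * ∫ t, f t * w t ∂μ) * c
      + ∫ t, f t ^ 2 * w t ∂μ := fun c => calc
    0 ≤ ∫ t, (f t - c) ^ 2 * w t ∂μ :=
      integral_nonneg_of_ae (hw.mono fun t ht => mul_nonneg (sq_nonneg _) ht)
    _ = ∫ t, f t ^ 2 * w t - 2 * c * (f t * w t) + c * c * w t ∂μ := by congr 1 with t; ring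
    _ = _ := by
      rw [integral_add (by exact hf2w.sub (hfw.const_mul _)) (hw_int.const_mul _),
        integral_sub hf2w (hfw.const_mul _), integral_const_mul, integral_const_mul]
      ring
  have h := discrim_le_zero hquad
  rw [discrim] at h
  linarith

theorem setIntegral_pos_of_forall_pos {X : Type*} [MeasurableSpace X] {μ : Measure X}
    {s : Set X} {f : X → ℝ} (hs : MeasurableSet s) (hμs : μ s ≠ 0) (hf : IntegrableOn f s μ)
    (hpos : ∀ t ∈ s, 0 < f t) : 0 < ∫ t in s, f t ∂μ := by
  rw [setIntegral_pos_iff_support_of_nonneg_ae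
      ((ae_restrict_iff' hs).2 (ae_of_all _ fun t ht => (hpos t ht).le)) hf,
    (inter_eq_right.2 fun t ht => (hpos t ht).ne' : Function.support f ∩ s = s)]
  exact pos_iff_ne_zero.2 hμs

section IncompleteGamma

variable {a x : ℝ}

theorem integrableOn_rpow_mul_exp_neg_Ioi {p : ℝ} (hp : -1 < p) (hx : 0 ≤ x) :
    IntegrableOn (fun t => t ^ p * exp (-t)) (Ioi x) := by
  have h := (GammaIntegral_convergent (s := p + 1) (by linarith)).mono_set (Ioi_subset_Ioi hx)
  simpa [mul_comm] using h

theorem norm_sub_rpow_pow_mul_exp_neg_le (ha : 0 ≤ a) (hx : 0 ≤ x) {t : ℝ} (ht : x ≤ t)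
    (n : ℕ) : ‖(t ^ a - x ^ a) ^ n * exp (-t)‖ ≤ t ^ (a * n) * exp (-t) := by
  have h0 : 0 ≤ t ^ a - x ^ a := sub_nonneg.2 (rpow_le_rpow hx ht ha)
  have h1 : t ^ a - x ^ a ≤ t ^ a := sub_le_self _ (rpow_nonneg hx a)
  rw [Real.norm_of_nonneg (by positivity), rpow_mul (hx.trans ht), rpow_natCast]
  gcongr

theorem integrableOn_sub_rpow_pow_mul_exp_neg (ha : 0 ≤ a) (hx : 0 ≤ x) (n : ℕ) :
    IntegrableOn (fun t => (t ^ a - x ^ a) ^ n * exp (-t)) (Ioi x) :=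
  (integrableOn_rpow_mul_exp_neg_Ioi (by nlinarith [n.cast_nonneg (α := ℝ)]) hx).mono'
    (by fun_prop : Measurable fun t : ℝ => (t ^ a - x ^ a) ^ n * exp (-t)).aestronglyMeasurable
    ((ae_restrict_iff' measurableSet_Ioi).2
      (ae_of_all _ fun _ ht => norm_sub_rpow_pow_mul_exp_neg_le ha hx (le_of_lt ht) n))

theorem tendsto_sub_rpow_pow_mul_exp_neg_atTop (ha : 0 ≤ a) (hx : 0 ≤ x) (n : ℕ) :
    Tendsto (fun t => (t ^ a - x ^ a) ^ n * exp (-t)) atTop (𝓝 0) :=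
  squeeze_zero_norm'
    (eventually_ge_atTop x |>.mono fun _ ht => norm_sub_rpow_pow_mul_exp_neg_le ha hx ht n)
    (by simpa using tendsto_rpow_mul_exp_neg_mul_atTop_nhds_zero (a * n) 1 one_pos)

theorem integral_Ioi_deriv_mul_exp_neg {g g' : ℝ → ℝ}
    (hderiv : ∀ t ∈ Ici x, HasDerivAt g (g' t) t) (hgx : g x = 0)
    (hg : IntegrableOn (fun t => g t * exp (-t)) (Ioi x))
    (hg' : IntegrableOn (fun t => g' t * exp (-t)) (Ioi x))
    (hlim : Tendsto (fun t => g t * exp (-t)) atTop (𝓝 0)) :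
    ∫ t in Ioi x, g' t * exp (-t) = ∫ t in Ioi x, g t * exp (-t) := by
  have h := integral_Ioi_of_hasDerivAt_of_tendsto' (f := fun t => g t * exp (-t))
    (f' := fun t => g' t * exp (-t) - g t * exp (-t))
    (fun t ht => ((hderiv t ht).fun_mul (hasDerivAt_neg t).exp).congr_deriv (by ring))
    (hg'.sub hg) hlim
  rw [integral_sub hg' hg, hgx, zero_mul, sub_zero] at h
  linarith

theorem mul_upperGamma_eq_integral (ha : 0 < a) (hx : 0 < x) :
    a * upperGamma a x = ∫ t in Ioi x, (t ^ a - x ^ a) * exp (-t) := by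
  have hderiv : ∀ t ∈ Ici x, HasDerivAt (fun t => t ^ a - x ^ a) (a * t ^ (a - 1)) t :=
    fun t ht => (hasDerivAt_rpow_const (Or.inl (hx.trans_le ht).ne')).sub_const _
  have hg' : IntegrableOn (fun t => a * (t ^ (a - 1) * exp (-t))) (Ioi x) :=
    (integrableOn_rpow_mul_exp_neg_Ioi (by linarith) hx.le).const_mul a
  rw [upperGamma, ← integral_const_mul, ← integral_Ioi_deriv_mul_exp_neg hderiv (sub_self _)
    (by simpa using integrableOn_sub_rpow_pow_mul_exp_neg ha.le hx.le 1)
    (by simpa only [mul_assoc] using hg')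
    (by simpa using tendsto_sub_rpow_pow_mul_exp_neg_atTop ha.le hx.le 1)]
  simp_rw [mul_assoc]

theorem two_mul_mul_upperGamma_two_mul_sub (ha : 0 < a) (hx : 0 < x) :
    2 * a * (upperGamma (2 * a) x - x ^ a * upperGamma a x)
      = ∫ t in Ioi x, (t ^ a - x ^ a) ^ 2 * exp (-t) := by
  have hderiv : ∀ t ∈ Ici x, HasDerivAt (fun t => (t ^ a - x ^ a) ^ 2)
      (2 * a * (t ^ (2 * a - 1) - x ^ a * t ^ (a - 1))) t := by
    intro t ht
    have ht0 : 0 < t := hx.trans_le ht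
    refine (((hasDerivAt_rpow_const (Or.inl ht0.ne')).sub_const (x ^ a)).pow 2).congr_deriv ?_
    rw [show 2 * a - 1 = a + (a - 1) by ring, rpow_add ht0]
    push_cast
    ring
  have hU := integrableOn_rpow_mul_exp_neg_Ioi (p := a - 1) (by linarith) hx.le
  have hV := integrableOn_rpow_mul_exp_neg_Ioi (p := 2 * a - 1) (by linarith) hx.le
  have hg' : IntegrableOn (fun t => 2 * a * (t ^ (2 * a - 1) * exp (-t)
      - x ^ a * (t ^ (a - 1) * exp (-t)))) (Ioi x) := (hV.sub (hU.const_mul _)).const_mul _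
  calc 2 * a * (upperGamma (2 * a) x - x ^ a * upperGamma a x)
      = ∫ t in Ioi x, 2 * a * (t ^ (2 * a - 1) * exp (-t) - x ^ a * (t ^ (a - 1) * exp (-t))) := by
        rw [upperGamma, upperGamma, ← integral_const_mul, ← integral_sub hV (hU.const_mul _),
          ← integral_const_mul]
    _ = ∫ t in Ioi x, 2 * a * (t ^ (2 * a - 1) - x ^ a * t ^ (a - 1)) * exp (-t) := by
        simp_rw [mul_sub, sub_mul, mul_assoc]
    _ = ∫ t in Ioi x, (t ^ a - x ^ a) ^ 2 * exp (-t) :=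
        integral_Ioi_deriv_mul_exp_neg hderiv (by simp)
          (integrableOn_sub_rpow_pow_mul_exp_neg ha.le hx.le 2)
          (by simpa only [mul_sub, sub_mul, mul_assoc] using hg')
          (tendsto_sub_rpow_pow_mul_exp_neg_atTop ha.le hx.le 2)

theorem Gamma_eq_lowerGamma_add_upperGamma (ha : 0 < a) (hx : 0 ≤ x) :
    Gamma a = lowerGamma a x + upperGamma a x := by
  have hint := integrableOn_rpow_mul_exp_neg_Ioi (p := a - 1) (by linarith) le_rfl
  rw [Gamma_eq_integral ha, lowerGamma, upperGamma, intervalIntegral.integral_of_le hx,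
    ← setIntegral_union Ioc_disjoint_Ioi_same measurableSet_Ioi
      (hint.mono_set Ioc_subset_Ioi_self) (hint.mono_set (Ioi_subset_Ioi hx)),
    Ioc_union_Ioi_eq_Ioi hx]
  simp_rw [mul_comm]

theorem exp_neg_mul_rpow_lt_mul_lowerGamma (ha : 0 < a) (hx : 0 < x) :
    exp (-x) * x ^ a < a * lowerGamma a x := by
  have hrpow : IntervalIntegrable (fun t => t ^ (a - 1)) volume 0 x :=
    intervalIntegral.intervalIntegrable_rpow' (by linarith)
  have hrpow_eq : ∫ t in (0 : ℝ)..x, t ^ (a - 1) = x ^ a / a := by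
    rw [integral_rpow (Or.inl (by linarith)), sub_add_cancel, zero_rpow ha.ne', sub_zero]
  have hpos : 0 < ∫ t in (0 : ℝ)..x, t ^ (a - 1) * exp (-t) - t ^ (a - 1) * exp (-x) :=
    intervalIntegral.intervalIntegral_pos_of_pos_on
      ((hrpow.mul_continuousOn (by fun_prop)).sub (hrpow.mul_const _))
      (fun t ht => by
        rw [← mul_sub]
        exact mul_pos (rpow_pos_of_pos ht.1 _) (sub_pos.2 (exp_lt_exp.2 (neg_lt_neg ht.2))))
      hx
  rw [intervalIntegral.integral_sub (hrpow.mul_continuousOn (by fun_prop)) (hrpow.mul_const _),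
    intervalIntegral.integral_mul_const, hrpow_eq, ← lowerGamma] at hpos
  calc exp (-x) * x ^ a = a * (x ^ a / a * exp (-x)) := by field_simp
    _ < a * lowerGamma a x := by gcongr; linarith

theorem sq_integral_sub_rpow_mul_exp_neg_le (ha : 0 ≤ a) (hx : 0 ≤ x) :
    (∫ t in Ioi x, (t ^ a - x ^ a) * exp (-t)) ^ 2
      ≤ exp (-x) * ∫ t in Ioi x, (t ^ a - x ^ a) ^ 2 * exp (-t) := by
  have h := sq_integral_mul_le_integral_mul_integral_sq_mul (μ := volume.restrict (Ioi x))
    (f := fun t => t ^ a - x ^ a) (ae_of_all _ fun t => (exp_pos (-t)).le)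
    (by simpa [IntegrableOn] using integrableOn_sub_rpow_pow_mul_exp_neg ha hx 0)
    (by simpa [IntegrableOn] using integrableOn_sub_rpow_pow_mul_exp_neg ha hx 1)
    (integrableOn_sub_rpow_pow_mul_exp_neg ha hx 2)
  rwa [integral_exp_neg_Ioi] at h

theorem integral_sub_rpow_sq_mul_exp_neg_pos (ha : 0 < a) (hx : 0 ≤ x) :
    0 < ∫ t in Ioi x, (t ^ a - x ^ a) ^ 2 * exp (-t) :=
  setIntegral_pos_of_forall_pos measurableSet_Ioi (by simp)
    (integrableOn_sub_rpow_pow_mul_exp_neg ha.le hx 2) fun t ht =>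
      mul_pos (pow_pos (sub_pos.2 (rpow_lt_rpow hx ht ha)) 2) (exp_pos _)

end IncompleteGamma

theorem incomplete_gamma_inequality (a x : ℝ) (ha : 0 < a) (hx : 0 < x) :
    x ^ a * (lowerGamma a x) ^ 2 - x ^ a * Real.Gamma a ^ 2
      + 2 * lowerGamma a x * upperGamma (2 * a) x > 0 := by
  set I₁ := ∫ t in Ioi x, (t ^ a - x ^ a) * exp (-t)
  set I₂ := ∫ t in Ioi x, (t ^ a - x ^ a) ^ 2 * exp (-t)
  have hU : a * upperGamma a x = I₁ := mul_upperGamma_eq_integral ha hx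
  have hV : 2 * a * (upperGamma (2 * a) x - x ^ a * upperGamma a x) = I₂ :=
    two_mul_mul_upperGamma_two_mul_sub ha hx
  have hkey : x ^ a * I₁ ^ 2 < a * lowerGamma a x * I₂ := calc
    x ^ a * I₁ ^ 2 ≤ x ^ a * (exp (-x) * I₂) := by
      gcongr; exact sq_integral_sub_rpow_mul_exp_neg_le ha.le hx.le
    _ = exp (-x) * x ^ a * I₂ := by ring
    _ < a * lowerGamma a x * I₂ := mul_lt_mul_of_pos_right
      (exp_neg_mul_rpow_lt_mul_lowerGamma ha hx) (integral_sub_rpow_sq_mul_exp_neg_pos ha hx.le)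
  have hscaled : a ^ 2 * (x ^ a * lowerGamma a x ^ 2 - x ^ a * Gamma a ^ 2
      + 2 * lowerGamma a x * upperGamma (2 * a) x) = a * lowerGamma a x * I₂ - x ^ a * I₁ ^ 2 := by
    rw [Gamma_eq_lowerGamma_add_upperGamma ha hx.le, ← hU, ← hV]
    ring
  exact pos_of_mul_pos_right (hscaled ▸ sub_pos.2 hkey) (sq_nonneg a)
end
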